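/- Fiber independence for metric warped products: if γ = (α, β) is a minimizer in B ×_f F parametrized proportional to arclength with f > 0, and F̂ is another strictly intrinsic metric space with β̂ a minimizing geodesic in F̂ of the same length and speed as β, then (α, β̂) is a minimizer in B ×_f F̂, with L(α,β̂) = L(α,β). -/

import Mathlib

/-- The warped sum of an admissible path `γ = (α, β)` over a partition `t`:
`Σᵢ (d_B(α(tᵢ₋₁),α(tᵢ))² + f(α(tᵢ))² d_F(β(tᵢ₋₁),β(tᵢ))²)^{1/2}`. -/
noncomputable def wSum {B F : Type*} [PseudoMetricSpace B] [PseudoMetricSpace F]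
    (f : B → ℝ) (γ : ℝ → B × F) {n : ℕ} (t : Fin (n + 1) → ℝ) : ENNReal :=
  ∑ i : Fin n, ENNReal.ofReal
    (Real.sqrt (dist (γ (t i.castSucc)).1 (γ (t i.succ)).1 ^ 2 +
      f (γ (t i.succ)).1 ^ 2 * dist (γ (t i.castSucc)).2 (γ (t i.succ)).2 ^ 2))

/-- The warped length of a path `γ` over `[a,b]`: the supremum of the warped sums
over all partitions `a = t₀ ≤ t₁ ≤ … ≤ t_N = b`. -/
noncomputable def wLength {B F : Type*} [PseudoMetricSpace B] [PseudoMetricSpace F]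
    (f : B → ℝ) (γ : ℝ → B × F) (a b : ℝ) : ENNReal :=
  ⨆ (n : ℕ) (t : Fin (n + 1) → ℝ) (_ : Monotone t) (_ : t 0 = a)
    (_ : t (Fin.last n) = b), wSum f γ t

/-- A path in `B × F` is admissible on `[a,b]` if it is continuous and both of its
components are rectifiable. -/
def Admissible {B F : Type*} [PseudoMetricSpace B] [PseudoMetricSpace F]
    (γ : ℝ → B × F) (a b : ℝ) : Prop :=
  ContinuousOn γ (Set.Icc a b) ∧
    eVariationOn (fun t => (γ t).1) (Set.Icc a b) < ⊤ ∧
    eVariationOn (fun t => (γ t).2) (Set.Icc a b) < ⊤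

/-- The warped product (pseudo-)distance on `B × F`: the infimum of warped lengths of
admissible paths joining the two points. -/
noncomputable def wDist {B F : Type*} [PseudoMetricSpace B] [PseudoMetricSpace F]
    (f : B → ℝ) (x y : B × F) : ENNReal :=
  ⨅ (γ : ℝ → B × F) (_ : Admissible γ 0 1) (_ : γ 0 = x) (_ : γ 1 = y),
    wLength f γ 0 1

/-- A metric space is strictly intrinsic (geodesic) if every pair of points is joined
by a minimizing geodesic, parametrized affinely on `[0,1]`. -/
def GeodesicMS (F : Type*) [PseudoMetricSpace F] : Prop :=
  ∀ x y : F, ∃ c : ℝ → F, c 0 = x ∧ c 1 = y ∧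
    ∀ s t : ℝ, dist (c s) (c t) = |s - t| * dist x y
/-!
Replacing the fiber component of a path by one with the same pairwise fiber distances leaves
every warped sum, hence the warped length, unchanged; so `L(α, β̂) = L(α, β)`. Conversely, any
admissible path `(σ₁, σ₂)` in `B ×_f F̂` between the endpoints of `(α, β̂)` can be pulled back to
`B ×_f F`: follow a geodesic of `F` from `β a` to `β b` at the parameter `d(σ₂ 0, σ₂ t) / d(β a, β b)`.
The result has fiber distances dominated by those of `σ₂`, so its warped length is no larger.
Hence `d_F̂ ≥ d_F = L(α, β) = L(α, β̂)`, and `L(α, β̂) ≥ d_F̂` because `(α, β̂)`, affinely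
reparametrized on `[0, 1]`, is itself a competitor.
-/

open Set

section WarpedLength

variable {B F F' : Type*} [PseudoMetricSpace B] [PseudoMetricSpace F] [PseudoMetricSpace F']

lemma Monotone.mem_Icc_of_endpoints {n : ℕ} {t : Fin (n + 1) → ℝ} {a b : ℝ} (ht : Monotone t)
    (h0 : t 0 = a) (h1 : t (Fin.last n) = b) (i : Fin (n + 1)) : t i ∈ Icc a b :=
  ⟨h0 ▸ ht (Fin.zero_le i), h1 ▸ ht (Fin.le_last i)⟩

lemma wSum_le_wLength (f : B → ℝ) (γ : ℝ → B × F) {a b : ℝ} {n : ℕ} {t : Fin (n + 1) → ℝ}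
    (ht : Monotone t) (h0 : t 0 = a) (h1 : t (Fin.last n) = b) :
    wSum f γ t ≤ wLength f γ a b :=
  le_iSup_of_le n <| le_iSup_of_le t <| le_iSup_of_le ht <| le_iSup_of_le h0 <|
    le_iSup_of_le h1 le_rfl

lemma wLength_le {f : B → ℝ} {γ : ℝ → B × F} {a b : ℝ} {c : ENNReal}
    (h : ∀ (n : ℕ) (t : Fin (n + 1) → ℝ), Monotone t → t 0 = a → t (Fin.last n) = b →
      wSum f γ t ≤ c) :
    wLength f γ a b ≤ c :=
  iSup_le fun n => iSup_le fun t => iSup_le fun ht => iSup_le fun h0 => iSup_le (h n t ht h0)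

lemma wSum_le_wSum (f : B → ℝ) {γ : ℝ → B × F} {γ' : ℝ → B × F'} {n : ℕ}
    {t : Fin (n + 1) → ℝ} (hfst : ∀ i, (γ' (t i)).1 = (γ (t i)).1)
    (hsnd : ∀ i j, dist (γ' (t i)).2 (γ' (t j)).2 ≤ dist (γ (t i)).2 (γ (t j)).2) :
    wSum f γ' t ≤ wSum f γ t := by
  refine Finset.sum_le_sum fun i _ => ENNReal.ofReal_le_ofReal (Real.sqrt_le_sqrt ?_)
  rw [hfst i.castSucc, hfst i.succ]
  gcongr
  exact hsnd i.castSucc i.succ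

lemma wLength_le_wLength (f : B → ℝ) {γ : ℝ → B × F} {γ' : ℝ → B × F'} {a b : ℝ}
    (hfst : ∀ u, (γ' u).1 = (γ u).1)
    (hsnd : ∀ s ∈ Icc a b, ∀ t ∈ Icc a b, dist (γ' s).2 (γ' t).2 ≤ dist (γ s).2 (γ t).2) :
    wLength f γ' a b ≤ wLength f γ a b :=
  wLength_le fun _ _ ht h0 h1 =>
    (wSum_le_wSum f (fun _ => hfst _) fun i j =>
      hsnd _ (ht.mem_Icc_of_endpoints h0 h1 i) _ (ht.mem_Icc_of_endpoints h0 h1 j)).trans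
      (wSum_le_wLength f γ ht h0 h1)

lemma wLength_congr (f : B → ℝ) {γ : ℝ → B × F} {γ' : ℝ → B × F'} {a b : ℝ}
    (hfst : ∀ u, (γ' u).1 = (γ u).1)
    (hsnd : ∀ s ∈ Icc a b, ∀ t ∈ Icc a b, dist (γ' s).2 (γ' t).2 = dist (γ s).2 (γ t).2) :
    wLength f γ' a b = wLength f γ a b :=
  le_antisymm (wLength_le_wLength f hfst fun s hs t ht => (hsnd s hs t ht).le)
    (wLength_le_wLength f (fun u => (hfst u).symm) fun s hs t ht => (hsnd s hs t ht).ge)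

lemma wLength_comp_le (f : B → ℝ) (γ : ℝ → B × F) {φ : ℝ → ℝ} (hφ : Monotone φ)
    {a b a' b' : ℝ} (h0 : φ a' = a) (h1 : φ b' = b) :
    wLength f (γ ∘ φ) a' b' ≤ wLength f γ a b :=
  wLength_le fun _ t ht ht0 ht1 =>
    wSum_le_wLength f γ (t := φ ∘ t) (hφ.comp ht) (by simp [ht0, h0]) (by simp [ht1, h1])

end WarpedLength

section Admissible

variable {B F F' : Type*} [PseudoMetricSpace B] [PseudoMetricSpace F] [PseudoMetricSpace F']

lemma ContinuousOn.of_dist_le {g : ℝ → F} {h : ℝ → F'} {S : Set ℝ}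
    (hh : ContinuousOn h S) (H : ∀ s ∈ S, ∀ t ∈ S, dist (g s) (g t) ≤ dist (h s) (h t)) :
    ContinuousOn g S := by
  intro t ht
  rw [Metric.continuousWithinAt_iff]
  intro ε hε
  obtain ⟨δ, hδ, hd⟩ := Metric.continuousWithinAt_iff.1 (hh t ht) ε hε
  exact ⟨δ, hδ, fun u hu hut => (H _ hu t ht).trans_lt (hd hu hut)⟩

lemma eVariationOn_le_of_dist_le {g : ℝ → F} {h : ℝ → F'} {S : Set ℝ}
    (H : ∀ s ∈ S, ∀ t ∈ S, dist (g s) (g t) ≤ dist (h s) (h t)) :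
    eVariationOn g S ≤ eVariationOn h S :=
  iSup_le fun p => le_iSup_of_le p <| Finset.sum_le_sum fun _ _ => by
    rw [edist_dist, edist_dist]
    exact ENNReal.ofReal_le_ofReal (H _ (p.2.2.2 _) _ (p.2.2.2 _))

lemma Admissible.of_dist_snd_le {γ : ℝ → B × F} {γ' : ℝ → B × F'} {a b : ℝ}
    (hγ : Admissible γ a b) (hfst : ∀ u, (γ' u).1 = (γ u).1)
    (hsnd : ∀ s ∈ Icc a b, ∀ t ∈ Icc a b, dist (γ' s).2 (γ' t).2 ≤ dist (γ s).2 (γ t).2) :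
    Admissible γ' a b := by
  have hfst' : (fun u => (γ' u).1) = fun u => (γ u).1 := funext hfst
  refine ⟨?_, hfst' ▸ hγ.2.1, (eVariationOn_le_of_dist_le hsnd).trans_lt hγ.2.2⟩
  have hcont₁ : ContinuousOn (fun u => (γ' u).1) (Icc a b) :=
    hfst' ▸ continuous_fst.comp_continuousOn hγ.1
  exact hcont₁.prodMk ((continuous_snd.comp_continuousOn hγ.1).of_dist_le hsnd)

lemma Admissible.comp_monotone {γ : ℝ → B × F} {a b a' b' : ℝ} (hγ : Admissible γ a b)
    {φ : ℝ → ℝ} (hφ : Monotone φ) (hφc : Continuous φ) (hmaps : MapsTo φ (Icc a' b') (Icc a b)) :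
    Admissible (γ ∘ φ) a' b' :=
  ⟨hγ.1.comp hφc.continuousOn hmaps,
    (eVariationOn.comp_le_of_monotoneOn _ φ (hφ.monotoneOn _) hmaps).trans_lt hγ.2.1,
    (eVariationOn.comp_le_of_monotoneOn _ φ (hφ.monotoneOn _) hmaps).trans_lt hγ.2.2⟩

end Admissible

section WarpedDistance

variable {B F F' : Type*} [PseudoMetricSpace B] [PseudoMetricSpace F] [PseudoMetricSpace F']

lemma wDist_le_wLength_zero_one (f : B → ℝ) {γ : ℝ → B × F} (hγ : Admissible γ 0 1) :
    wDist f (γ 0) (γ 1) ≤ wLength f γ 0 1 :=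
  iInf_le_of_le γ <| iInf_le_of_le hγ <| iInf_le_of_le rfl <| iInf_le_of_le rfl le_rfl

lemma wDist_le_wLength (f : B → ℝ) {γ : ℝ → B × F} {a b : ℝ} (hab : a ≤ b)
    (hγ : Admissible γ a b) : wDist f (γ a) (γ b) ≤ wLength f γ a b := by
  set φ : ℝ → ℝ := fun u => a + (b - a) * u
  have hφ : Monotone φ := fun u v huv => by
    simpa [φ] using mul_le_mul_of_nonneg_left huv (sub_nonneg.2 hab)
  have hmaps : MapsTo φ (Icc 0 1) (Icc a b) := fun u ⟨hu0, hu1⟩ =>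
    ⟨by simpa [φ] using hφ hu0, by simpa [φ] using hφ hu1⟩
  have h0 : φ 0 = a := by simp [φ]
  have h1 : φ 1 = b := by simp [φ]
  calc wDist f (γ a) (γ b) = wDist f ((γ ∘ φ) 0) ((γ ∘ φ) 1) := by simp [h0, h1]
    _ ≤ wLength f (γ ∘ φ) 0 1 :=
      wDist_le_wLength_zero_one f (hγ.comp_monotone hφ (by fun_prop) hmaps)
    _ ≤ wLength f γ a b := wLength_comp_le f γ hφ h0 h1

lemma GeodesicMS.exists_path_dist_le (hF : GeodesicMS F) (σ : ℝ → F') {x y : F}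
    (hxy : dist x y = dist (σ 0) (σ 1)) :
    ∃ g : ℝ → F, g 0 = x ∧ g 1 = y ∧ ∀ s t, dist (g s) (g t) ≤ dist (σ s) (σ t) := by
  obtain ⟨c, hc0, hc1, hc⟩ := hF x y
  rcases eq_or_ne (dist x y) 0 with hd | hd
  · exact ⟨c, hc0, hc1, fun s t => by rw [hc, hd, mul_zero]; exact dist_nonneg⟩
  refine ⟨fun t => c (dist (σ 0) (σ t) / dist x y), ?_, ?_, fun s t => ?_⟩
  · simpa using hc0
  · simpa [← hxy, div_self hd] using hc1
  · have hpos : 0 < dist x y := dist_nonneg.lt_of_ne' hd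
    calc dist (c (dist (σ 0) (σ s) / dist x y)) (c (dist (σ 0) (σ t) / dist x y))
        = |dist (σ 0) (σ s) - dist (σ 0) (σ t)| := by
          rw [hc, ← sub_div, abs_div, abs_of_pos hpos, div_mul_cancel₀ _ hd]
      _ ≤ dist (σ s) (σ t) := by
          simpa only [dist_comm (σ 0)] using abs_dist_sub_le (σ s) (σ t) (σ 0)

lemma GeodesicMS.wDist_le_of_dist_eq (hF : GeodesicMS F) (f : B → ℝ) (p q : B) {x y : F}
    {x' y' : F'} (hxy : dist x y = dist x' y') :
    wDist f (p, x) (q, y) ≤ wDist f (p, x') (q, y') := by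
  refine le_iInf fun σ => le_iInf fun hσ => le_iInf fun h0 => le_iInf fun h1 => ?_
  obtain ⟨g, hg0, hg1, hg⟩ :=
    hF.exists_path_dist_le (fun t => (σ t).2) (x := x) (y := y) (by simp [h0, h1, hxy])
  have hτ : Admissible (fun t => ((σ t).1, g t)) 0 1 :=
    hσ.of_dist_snd_le (fun _ => rfl) fun s _ t _ => hg s t
  calc wDist f (p, x) (q, y) = wDist f ((σ 0).1, g 0) ((σ 1).1, g 1) := by simp [h0, h1, hg0, hg1]
    _ ≤ wLength f (fun t => ((σ t).1, g t)) 0 1 := wDist_le_wLength_zero_one f hτ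
    _ ≤ wLength f σ 0 1 := wLength_le_wLength f (fun _ => rfl) fun s _ t _ => hg s t

end WarpedDistance

theorem warped_product_fiber_independence_general
    {B F F' : Type*} [MetricSpace B] [MetricSpace F] [MetricSpace F']
    (hF : GeodesicMS F)
    (f : B → ℝ)
    (a b : ℝ) (hab : a ≤ b)
    (α : ℝ → B) (β : ℝ → F) (βhat : ℝ → F')
    (hadm : Admissible (fun t => (α t, β t)) a b)
    (hmin : wLength f (fun t => (α t, β t)) a b = wDist f (α a, β a) (α b, β b))
    (hββhat : ∀ s t : ℝ, s ∈ Set.Icc a b → t ∈ Set.Icc a b →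
      edist (βhat s) (βhat t) = edist (β s) (β t)) :
    wLength f (fun t => (α t, βhat t)) a b = wLength f (fun t => (α t, β t)) a b ∧
    wLength f (fun t => (α t, βhat t)) a b =
      wDist f (α a, βhat a) (α b, βhat b) := by
  have hdist : ∀ s ∈ Icc a b, ∀ t ∈ Icc a b, dist (βhat s) (βhat t) = dist (β s) (β t) := by
    intro s hs t ht
    simpa only [edist_dist, ENNReal.ofReal_eq_ofReal_iff dist_nonneg dist_nonneg]
      using hββhat s t hs ht
  have hlength : wLength f (fun t => (α t, βhat t)) a b = wLength f (fun t => (α t, β t)) a b :=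
    wLength_congr f (fun _ => rfl) hdist
  have hadm' : Admissible (fun t => (α t, βhat t)) a b :=
    hadm.of_dist_snd_le (fun _ => rfl) fun s hs t ht => (hdist s hs t ht).le
  refine ⟨hlength, le_antisymm ?_ (wDist_le_wLength f hab hadm')⟩
  rw [hlength, hmin]
  exact hF.wDist_le_of_dist_eq f _ _ (hdist a ⟨le_rfl, hab⟩ b ⟨hab, le_rfl⟩).symm

/-- Fiber independence for metric warped products: if `γ = (α,β)` is a minimizer in
`B ×_f F` parametrized proportionally to arclength with `f > 0`, and `F̂` is another
strictly intrinsic metric space with `β̂` a minimizing geodesic of the same length and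
speed as `β` (encoded by `d_{F̂}(β̂ s, β̂ t) = d_F(β s, β t)` for all parameters),
then `(α, β̂)` is a minimizer in `B ×_f F̂` with the same warped length. -/
theorem warped_product_fiber_independence
    {B F F' : Type*} [MetricSpace B] [MetricSpace F] [MetricSpace F']
    [CompleteSpace B] [LocallyCompactSpace B]
    (hB : GeodesicMS B) (hF : GeodesicMS F) (hF' : GeodesicMS F')
    (f : B → ℝ) (hf : Continuous f) (hfpos : ∀ x, 0 < f x)
    (a b : ℝ) (hab : a ≤ b)
    (α : ℝ → B) (β : ℝ → F) (βhat : ℝ → F')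
    (hadm : Admissible (fun t => (α t, β t)) a b)
    (hspeed : ∃ v : ℝ, ∀ s t : ℝ, a ≤ s → s ≤ t → t ≤ b →
      wLength f (fun u => (α u, β u)) s t = ENNReal.ofReal (v * (t - s)))
    (hmin : wLength f (fun t => (α t, β t)) a b = wDist f (α a, β a) (α b, β b))
    (hββhat : ∀ s t : ℝ, s ∈ Set.Icc a b → t ∈ Set.Icc a b →
      edist (βhat s) (βhat t) = edist (β s) (β t)) :
    wLength f (fun t => (α t, βhat t)) a b = wLength f (fun t => (α t, β t)) a b ∧
    wLength f (fun t => (α t, βhat t)) a b =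
      wDist f (α a, βhat a) (α b, βhat b) :=
  warped_product_fiber_independence_general hF f a b hab α β βhat hadm hmin hββhat
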